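/- arXiv:2210.10427 — 2 statements merged into one kernel-verified Lean document; each statement's English description precedes it below -/
import Mathlib

section
/- Non-crossing property: Let A : ℤ × ℕ → {-1,+1} be any function, let N ∈ ℕ. Define the forward walk X by X_0 ∈ ℤ and X_{n+1} = X_n + A(X_n, n) for n < N, and let the backward walk Ŷ = (Ŷ_0, ..., Ŷ_N), with Ŷ_N ∈ ℤ, satisfy Ŷ_m + A(Ŷ_m, m) = Ŷ_{m+1} for all m < N (i.e. Ŷ is also a trajectory of the same step rule). If X_0 and Ŷ_0 have the same parity, then (Ŷ_0 - X_0)(Ŷ_N - X_N) ≥ 0. -/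
lemma aux_mono (A : ℤ → ℕ → ℤ) (hA : ∀ y n, A y n = 1 ∨ A y n = -1)
    (N : ℕ) (X Y : ℕ → ℤ)
    (hX : ∀ n < N, X (n + 1) = X n + A (X n) n)
    (hY : ∀ n < N, Y (n + 1) = Y n + A (Y n) n)
    (hpar : X 0 % 2 = Y 0 % 2) (hle : X 0 ≤ Y 0) :
    ∀ n ≤ N, X n ≤ Y n ∧ X n % 2 = Y n % 2 := by
  intro n hn
  induction n with
  | zero => exact ⟨hle, hpar⟩
  | succ k ih =>
    have hk : k < N := hn
    obtain ⟨hle', hpar'⟩ := ih (le_of_lt hk)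
    rw [hX k hk, hY k hk]
    rcases eq_or_lt_of_le hle' with heq | hlt
    · rw [heq]; exact ⟨le_refl _, rfl⟩
    · have hgap : 2 ∣ Y k - X k := by omega
      have h2 : X k + 2 ≤ Y k := by omega
      rcases hA (X k) k with h1 | h1 <;> rcases hA (Y k) k with h2' | h2' <;>
        constructor <;> omega

theorem stmt_1 (A : ℤ → ℕ → ℤ) (hA : ∀ y n, A y n = 1 ∨ A y n = -1)
    (N : ℕ) (X Y : ℕ → ℤ)
    (hX : ∀ n < N, X (n + 1) = X n + A (X n) n)
    (hY : ∀ n < N, Y (n + 1) = Y n + A (Y n) n)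
    (hpar : X 0 % 2 = Y 0 % 2) :
    0 ≤ (Y 0 - X 0) * (Y N - X N) := by
  rcases le_total (X 0) (Y 0) with h | h
  · have := aux_mono A hA N X Y hX hY hpar h N (le_refl N)
    exact mul_nonneg (by omega) (by omega)
  · have := aux_mono A hA N Y X hY hX hpar.symm h N (le_refl N)
    have h1 : Y 0 - X 0 ≤ 0 := by omega
    have h2 : Y N - X N ≤ 0 := by omega
    exact mul_nonneg_iff.mpr (Or.inr ⟨h1, h2⟩)
end

section
/- Non-crossing for forward walk vs. paper's backward walk: let A : ℤ × ℕ → {-1,+1}, N ∈ ℕ. Let X satisfy X_{n+1} = X_n + A(X_n, n) for n < N, and let Ŷ satisfy Ŷ_{m} = Ŷ_{m+1} − A(Ŷ_{m+1}, m+1) for m < N (equivalently Ŷ_{N−n−1} = Ŷ_{N−n} − A(Ŷ_{N−n}, N−n)). If X_0 and Ŷ_0 have the same parity, then (Ŷ_0 − X_0)(Ŷ_N − X_N) ≥ 0. -/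
private lemma nocross_key (A : ℤ → ℕ → ℤ) (hA : ∀ y n, A y n = 1 ∨ A y n = -1)
    (N : ℕ) (X Y : ℕ → ℤ)
    (hX : ∀ n < N, X (n + 1) = X n + A (X n) n)
    (hY : ∀ m < N, Y m = Y (m + 1) - A (Y (m + 1)) (m + 1))
    (hpar : X 0 % 2 = Y 0 % 2)
    (hneg : Y N - X N < 0) : Y 0 - X 0 ≤ 0 := by
  -- evenness of the difference
  have heven : ∀ n, n ≤ N → (Y n - X n) % 2 = 0 := by
    intro n
    induction n with
    | zero => intro _; omega
    | succ m ih =>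
      intro hm
      have h1 := hX m (by omega)
      have h2 := hY m (by omega)
      have ha1 := hA (Y (m+1)) (m+1)
      have ha2 := hA (X m) m
      have := ih (by omega)
      omega
  -- invariant: P n
  set P : ℕ → Prop := fun n => Y n - X n < 0 ∨ (Y n - X n = 0 ∧ A (Y n) n = 1) with hP
  have step : ∀ m, m + 1 ≤ N → P (m + 1) → P m := by
    intro m hm h
    have h1 := hX m (by omega)
    have h2 := hY m (by omega)
    have ha1 := hA (Y (m+1)) (m+1)
    have ha2 := hA (X m) m
    have hev := heven (m+1) hm
    rcases h with h | ⟨h, ha⟩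
    · -- D(m+1) < 0, hence ≤ -2
      rcases ha1 with ha1 | ha1 <;> rcases ha2 with ha2 | ha2
      all_goals {
        by_cases hz : Y m - X m < 0
        · exact Or.inl hz
        · refine Or.inr ⟨by omega, ?_⟩
          have hyx : Y m = X m := by omega
          rw [hyx]; omega }
    · -- D(m+1) = 0 and A (Y (m+1)) (m+1) = 1
      rcases ha2 with ha2 | ha2
      · refine Or.inr ⟨by omega, ?_⟩
        have hyx : Y m = X m := by omega
        rw [hyx]; omega
      · exact Or.inl (by omega)
  have main : ∀ k, k ≤ N → P (N - k) := by
    intro k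
    induction k with
    | zero => intro _; simpa [hP] using Or.inl hneg
    | succ j ih =>
      intro hj
      have hNj : N - j = (N - (j+1)) + 1 := by omega
      have := ih (by omega)
      rw [hNj] at this
      exact step _ (by omega) this
  have h0 := main N (le_refl N)
  simp only [Nat.sub_self] at h0
  rcases h0 with h | ⟨h, _⟩ <;> omega

theorem stmt_11 (A : ℤ → ℕ → ℤ) (hA : ∀ y n, A y n = 1 ∨ A y n = -1)
    (N : ℕ) (X Y : ℕ → ℤ)
    (hX : ∀ n < N, X (n + 1) = X n + A (X n) n)
    (hY : ∀ m < N, Y m = Y (m + 1) - A (Y (m + 1)) (m + 1))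
    (hpar : X 0 % 2 = Y 0 % 2) :
    0 ≤ (Y 0 - X 0) * (Y N - X N) := by
  rcases lt_trichotomy (Y N - X N) 0 with h | h | h
  · have := nocross_key A hA N X Y hX hY hpar h
    nlinarith [mul_nonneg (neg_nonneg.2 this) (neg_nonneg.2 h.le)]
  · rw [h, mul_zero]
  · -- apply key lemma to the reflected system
    have key := nocross_key (fun y n => -(A (-y) n))
      (by intro y n; rcases hA (-y) n with h' | h' <;> simp [h'])
      N (fun n => -(X n)) (fun n => -(Y n))
      (by intro n hn; have := hX n hn; simp; omega)
      (by intro m hm; have := hY m hm; simp; omega)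
      (by show (-X 0) % 2 = (-Y 0) % 2; omega) (by simp; omega)
    have h0 : 0 ≤ Y 0 - X 0 := by simp at key; omega
    exact mul_nonneg h0 h.le
end
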